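/- Let g be the 3-dimensional real Lie algebra with basis e₁, e₂, e₃ and brackets [e₁,e₃] = e₁, [e₂,e₃] = e₂, [e₁,e₂] = 0 (Bianchi type with θ = 1). Then g × g admits an integrable complex structure. -/

import Mathlib

/-- Componentwise bracket on the product. -/
instance prodBracket {L : Type*} [LieRing L] : Bracket (L × L) (L × L) :=
  ⟨fun x y => (⁅x.1, y.1⁆, ⁅x.2, y.2⁆)⟩

instance prodLieRing {L : Type*} [LieRing L] : LieRing (L × L) where
  add_lie x y z := by ext <;> simp [Bracket.bracket]
  lie_add x y z := by ext <;> simp [Bracket.bracket]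
  lie_self x := by ext <;> simp [Bracket.bracket]
  leibniz_lie x y z := by ext <;> simp [Bracket.bracket]

instance prodLieAlgebra {L : Type*} [LieRing L] [LieAlgebra ℝ L] : LieAlgebra ℝ (L × L) where
  lie_smul t x y := by ext <;> simp [Bracket.bracket]

/-!
The Nijenhuis tensor of an almost complex structure `J` is antisymmetric and satisfies
`N (J x) y = -J (N x y)`, so it is complex antilinear in each argument and vanishes as soon as
it vanishes on pairs from a complex basis. On `g × g` let `J (x, y) = (R x - P y, R y + P x)`,
where `R` rotates `e₁ ↦ e₂ ↦ -e₁` and kills `e₃`, and `P` projects onto `ℝ e₃`; a complex basis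
is `(e₁, 0)`, `(0, e₁)`, `(e₃, 0)`. On these three vectors the only nonzero contributions to `N`
come from `[e₁, e₃] = e₁` and `[e₂, e₃] = e₂`, and they cancel.
-/

section Nijenhuis

variable {R L : Type*} [CommRing R] [LieRing L] [LieAlgebra R L]

def nijenhuis (J : L →ₗ[R] L) : L →ₗ[R] L →ₗ[R] L :=
  LinearMap.mk₂ R (fun x y => ⁅x, y⁆ + J ⁅J x, y⁆ + J ⁅x, J y⁆ - ⁅J x, J y⁆)
    (fun x x' y => by simp only [add_lie, map_add]; abel)
    (fun t x y => by simp only [smul_lie, map_smul, smul_add, smul_sub])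
    (fun x y y' => by simp only [lie_add, map_add]; abel)
    (fun t x y => by simp only [lie_smul, map_smul, smul_add, smul_sub])

variable (J : L →ₗ[R] L)

@[simp]
theorem nijenhuis_apply (x y : L) :
    nijenhuis J x y = ⁅x, y⁆ + J ⁅J x, y⁆ + J ⁅x, J y⁆ - ⁅J x, J y⁆ :=
  rfl

theorem nijenhuis_swap (x y : L) : nijenhuis J y x = -nijenhuis J x y := by
  simp only [nijenhuis_apply, ← lie_skew y, ← lie_skew (J y), map_neg]
  abel

theorem nijenhuis_self (x : L) : nijenhuis J x x = 0 := by
  simp only [nijenhuis_apply, lie_self, ← lie_skew x (J x), map_neg]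
  abel

variable {J}

theorem nijenhuis_map_left (hJ : ∀ x, J (J x) = -x) (x y : L) :
    nijenhuis J (J x) y = -J (nijenhuis J x y) := by
  simp only [nijenhuis_apply, hJ, neg_lie, map_add, map_sub, map_neg]
  abel

theorem nijenhuis_map_right (hJ : ∀ x, J (J x) = -x) (x y : L) :
    nijenhuis J x (J y) = -J (nijenhuis J x y) := by
  rw [nijenhuis_swap, nijenhuis_map_left hJ, nijenhuis_swap J y, map_neg]

theorem nijenhuis_eq_zero_of_span {ι : Type*} [LinearOrder ι] (hJ : ∀ x, J (J x) = -x)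
    (u : ι → L) (hspan : Submodule.span R (Set.range u ∪ Set.range (J ∘ u)) = ⊤)
    (hu : ∀ i j, i < j → nijenhuis J (u i) (u j) = 0) : nijenhuis J = 0 := by
  replace hu : ∀ i j, nijenhuis J (u i) (u j) = 0 := fun i j => by
    rcases lt_trichotomy i j with h | rfl | h
    · exact hu i j h
    · exact nijenhuis_self J (u i)
    · rw [nijenhuis_swap, hu j i h, neg_zero]
  have hleft : ∀ x y, nijenhuis J x y = 0 → nijenhuis J (J x) y = 0 := fun x y h => by
    rw [nijenhuis_map_left hJ, h, map_zero, neg_zero]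
  have hright : ∀ x y, nijenhuis J x y = 0 → nijenhuis J x (J y) = 0 := fun x y h => by
    rw [nijenhuis_map_right hJ, h, map_zero, neg_zero]
  refine LinearMap.ext_on hspan fun x hx => LinearMap.ext_on hspan fun y hy => ?_
  obtain ⟨i, rfl⟩ | ⟨i, rfl⟩ := hx <;> obtain ⟨j, rfl⟩ | ⟨j, rfl⟩ := hy
  · exact hu i j
  · exact hright _ _ (hu i j)
  · exact hleft _ _ (hu i j)
  · exact hleft _ _ (hright _ _ (hu i j))

end Nijenhuis

section Bianchi

variable {g : Type*} [LieRing g] [LieAlgebra ℝ g] (b : Module.Basis (Fin 3) ℝ g)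

noncomputable def bianchiRotation : g →ₗ[ℝ] g := b.constr ℝ ![b 1, -b 0, 0]

noncomputable def bianchiProjection : g →ₗ[ℝ] g := b.constr ℝ ![0, 0, b 2]

noncomputable def bianchiComplexStructure : (g × g) →ₗ[ℝ] (g × g) :=
  (bianchiRotation b ∘ₗ LinearMap.fst ℝ g g - bianchiProjection b ∘ₗ LinearMap.snd ℝ g g).prod
    (bianchiRotation b ∘ₗ LinearMap.snd ℝ g g + bianchiProjection b ∘ₗ LinearMap.fst ℝ g g)

@[simp]
theorem bianchiRotation_basis (i : Fin 3) : bianchiRotation b (b i) = ![b 1, -b 0, 0] i :=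
  b.constr_basis ℝ _ i

@[simp]
theorem bianchiProjection_basis (i : Fin 3) : bianchiProjection b (b i) = ![0, 0, b 2] i :=
  b.constr_basis ℝ _ i

@[simp]
theorem bianchiComplexStructure_apply (x y : g) :
    bianchiComplexStructure b (x, y) =
      (bianchiRotation b x - bianchiProjection b y, bianchiRotation b y + bianchiProjection b x) :=
  rfl

theorem bianchiComplexStructure_apply_apply (x : g × g) :
    bianchiComplexStructure b (bianchiComplexStructure b x) = -x := by
  suffices h : bianchiComplexStructure b ∘ₗ bianchiComplexStructure b = -LinearMap.id from
    LinearMap.congr_fun h x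
  refine (b.prod b).ext fun k => ?_
  rcases k with i | i <;> fin_cases i <;> simp

noncomputable def bianchiComplexBasis : Fin 3 → g × g := ![(b 0, 0), (0, b 0), (b 2, 0)]

theorem span_bianchiComplexBasis :
    Submodule.span ℝ (Set.range (bianchiComplexBasis b) ∪
      Set.range (bianchiComplexStructure b ∘ bianchiComplexBasis b)) = ⊤ := by
  refine eq_top_iff.2 ((b.prod b).span_eq ▸ Submodule.span_mono ?_)
  rintro _ ⟨i | i, rfl⟩ <;> fin_cases i
  all_goals simp [bianchiComplexBasis, Fin.exists_fin_succ]

variable {b} in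
theorem nijenhuis_bianchiComplexStructure (h13 : ⁅b 0, b 2⁆ = b 0) (h23 : ⁅b 1, b 2⁆ = b 1) :
    nijenhuis (bianchiComplexStructure b) = 0 := by
  refine nijenhuis_eq_zero_of_span (bianchiComplexStructure_apply_apply b) _
    (span_bianchiComplexBasis b) fun i j hij => ?_
  fin_cases i <;> fin_cases j <;> simp [bianchiComplexBasis, h13, h23] at hij ⊢

end Bianchi

theorem bianchi4_theta_one_product_admits_general {g : Type*} [LieRing g] [LieAlgebra ℝ g]
    (b : Module.Basis (Fin 3) ℝ g) 
    (h13 : ⁅b 0, b 2⁆ = b 0) (h23 : ⁅b 1, b 2⁆ = b 1) :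
    ∃ 𝒥 : (g × g) →ₗ[ℝ] (g × g), (∀ x, 𝒥 (𝒥 x) = -x) ∧
      ∀ x y : g × g,
        ⁅x, y⁆ + 𝒥 ⁅𝒥 x, y⁆ + 𝒥 ⁅x, 𝒥 y⁆ - ⁅𝒥 x, 𝒥 y⁆ = 0 :=
  ⟨bianchiComplexStructure b, bianchiComplexStructure_apply_apply b, fun x y =>
    LinearMap.congr_fun₂ (nijenhuis_bianchiComplexStructure h13 h23) x y⟩

theorem bianchi4_theta_one_product_admits {g : Type*} [LieRing g] [LieAlgebra ℝ g]
    (b : Module.Basis (Fin 3) ℝ g) 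
    (h13 : ⁅b 0, b 2⁆ = b 0) (h23 : ⁅b 1, b 2⁆ = b 1) (h12 : ⁅b 0, b 1⁆ = 0) :
    ∃ 𝒥 : (g × g) →ₗ[ℝ] (g × g), (∀ x, 𝒥 (𝒥 x) = -x) ∧
      ∀ x y : g × g,
        ⁅x, y⁆ + 𝒥 ⁅𝒥 x, y⁆ + 𝒥 ⁅x, 𝒥 y⁆ - ⁅𝒥 x, 𝒥 y⁆ = 0 :=
  bianchi4_theta_one_product_admits_general b h13 h23
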